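/- arXiv:1110.1194 — 4 statements merged into one kernel-verified Lean document; each statement's English description precedes it below -/
import Mathlib

section
/- The encoding of an integer w as a self-inverting permutation via Encode_W-to-SIP followed by the decoding Decode_SIP-to-W returns w; i.e., the encoding map from n-bit integers to self-inverting permutations of length 2n+1 is injective. -/
/-- Value (as Bool, true = 1) of the bit sequence B* = flip(B') at position i ∈ {1,...,2n+1},
where B' = 0^n ‖ (n-bit binary representation of w, MSB first) ‖ 1. -/
def bstar (n w i : ℕ) : Bool :=
  decide (i ≤ n) || (decide (i ≠ 2 * n + 1) && !(w.testBit (2 * n - i)))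

/-- Positions (from 1 to 2n+1) of the 0s of B*, in increasing order. -/
def zerosPos (n w : ℕ) : List ℕ :=
  ((List.range (2 * n + 1)).map (· + 1)).filter fun i => !bstar n w i

/-- Positions (from 1 to 2n+1) of the 1s of B*, in increasing order. -/
def onesPos (n w : ℕ) : List ℕ :=
  ((List.range (2 * n + 1)).map (· + 1)).filter fun i => bstar n w i

/-- The bitonic sequence σ = X ‖ reverse(Y) of Encode_W-to-SIP. -/
def sigmaList (n w : ℕ) : List ℕ :=
  zerosPos n w ++ (onesPos n w).reverse

/-- The self-inverting permutation π* of Encode_W-to-SIP, as the function pairing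
σ_i with σ_{2n+2-i} (1-indexed), i.e., index i with index 2n-i (0-indexed),
fixing the middle element. -/
def encodeSIP (n w : ℕ) : ℕ → ℕ := fun x =>
  (sigmaList n w).getD (2 * n - (sigmaList n w).idxOf x) 0

/-! Every bit of `w` can be read off `π* = encodeSIP n w`. Write `X = zerosPos`, `Y = onesPos`,
so `σ = X ++ reverse Y`; mirroring indices `i ↦ 2n - i` in `σ` shows that `π*` sends `X[i]` to
`Y[i]`, and `Y[k]` to `Y[2n - k]` when `k ≥ |X|`. Since `B*` starts with `n` ones and ends with a
zero, `Y` begins with `1, …, n` and `X` ends with `2n + 1`, at index `s = |X| - 1`. A position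
`p ∈ (n, 2n]` then lies in `X` exactly when `π* p < π* (2n + 1)`: for `p = X[m]` with `m < s` the
image is `m + 1`, while `π* (2n + 1)` is `s + 1` (or `2n + 1` when `s = n`); for `p ∈ Y` both
images lie in the increasing list `Y`, at indices on either side of `s`. -/

namespace List

variable {α : Type*}

theorem getD_append_reverse_sub_of_lt (X Y : List α) (d : α) {N i : ℕ}
    (hN : X.length + Y.length = N + 1) (hi : i < Y.length) :
    (X ++ Y.reverse).getD (N - i) d = Y[i] := by
  rw [getD_append_right _ _ _ _ (by omega), getD_eq_getElem _ _ (by rw [length_reverse]; omega),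
    getElem_reverse]
  congr 1
  omega

theorem getD_append_reverse_sub_of_le (X Y : List α) (d : α) {N i : ℕ}
    (hN : X.length + Y.length = N + 1) (hi : Y.length ≤ i) (hiN : i ≤ N) :
    (X ++ Y.reverse).getD (N - i) d = X[N - i]'(by omega) := by
  rw [getD_append _ _ _ _ (by omega), getD_eq_getElem]

variable [BEq α] [LawfulBEq α]

theorem idxOf_append_reverse_getElem {X Y : List α} (hY : Y.Nodup) {k : ℕ} (hk : k < Y.length)
    (hkX : Y[k] ∉ X) : (X ++ Y.reverse).idxOf Y[k] = X.length + (Y.length - 1 - k) := by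
  have hrev : Y[k] = Y.reverse[Y.length - 1 - k]'(by rw [length_reverse]; omega) := by
    rw [getElem_reverse]
    congr 1
    omega
  rw [idxOf_append_of_notMem hkX, hrev, (nodup_reverse.mpr hY).idxOf_getElem]

end List

open List

theorem map_add_one_range (m : ℕ) : (List.range m).map (· + 1) = range' 1 m := by
  simp only [range'_eq_map_range, Nat.add_comm 1]

theorem range'_one_two_mul_add_one (n : ℕ) :
    range' 1 (2 * n + 1) = range' 1 n ++ range' (n + 1) n ++ [2 * n + 1] := by
  rw [range'_concat, Nat.add_comm n 1, range'_append_1, two_mul]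
  simp only [one_mul, Nat.add_comm 1]

section Encoding

variable {n w : ℕ}

theorem bstar_of_le {i : ℕ} (h : i ≤ n) : bstar n w i = true := by
  simp [bstar, h]

theorem bstar_of_lt_of_le {i : ℕ} (h₁ : n < i) (h₂ : i ≤ 2 * n) :
    bstar n w i = !w.testBit (2 * n - i) := by
  simp [bstar, show ¬ i ≤ n by omega, show i ≠ 2 * n + 1 by omega]

theorem bstar_two_mul_add_one : bstar n w (2 * n + 1) = false := by
  simp [bstar, show ¬ 2 * n + 1 ≤ n by omega]

theorem zerosPos_eq :
    zerosPos n w = (range' (n + 1) n).filter (fun i => !bstar n w i) ++ [2 * n + 1] := by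
  rw [zerosPos, map_add_one_range, range'_one_two_mul_add_one, filter_append, filter_append,
    filter_eq_nil_iff.mpr, nil_append]
  · simp [bstar_two_mul_add_one]
  · intro i hi
    rw [bstar_of_le (by have := mem_range'_1.mp hi; omega)]
    decide

theorem onesPos_eq :
    onesPos n w = range' 1 n ++ (range' (n + 1) n).filter (bstar n w ·) := by
  rw [onesPos, map_add_one_range, range'_one_two_mul_add_one, filter_append, filter_append,
    filter_eq_self.mpr]
  · simp [bstar_two_mul_add_one]
  · intro i hi
    exact bstar_of_le (by have := mem_range'_1.mp hi; omega)

theorem zerosPos_sortedLT : (zerosPos n w).SortedLT := by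
  rw [zerosPos, map_add_one_range]
  exact ((pairwise_lt_range' 1).filter _).sortedLT

theorem onesPos_sortedLT : (onesPos n w).SortedLT := by
  rw [onesPos, map_add_one_range]
  exact ((pairwise_lt_range' 1).filter _).sortedLT

theorem notMem_zerosPos_of_mem_onesPos {i : ℕ} (h : i ∈ onesPos n w) : i ∉ zerosPos n w :=
  fun h' => by simpa [(mem_filter.mp h).2] using (mem_filter.mp h').2

theorem mem_zerosPos_iff {i : ℕ} (h₁ : n < i) (h₂ : i ≤ 2 * n) :
    i ∈ zerosPos n w ↔ w.testBit (2 * n - i) = true := by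
  simp only [zerosPos, map_add_one_range, mem_filter, mem_range'_1, bstar_of_lt_of_le h₁ h₂,
    Bool.not_not]
  exact and_iff_right (by omega)

theorem mem_onesPos_iff {i : ℕ} (h₁ : n < i) (h₂ : i ≤ 2 * n) :
    i ∈ onesPos n w ↔ w.testBit (2 * n - i) = false := by
  simp only [onesPos, map_add_one_range, mem_filter, mem_range'_1, bstar_of_lt_of_le h₁ h₂,
    Bool.not_eq_true']
  exact and_iff_right (by omega)

variable (n w) in
theorem n_le_length_onesPos : n ≤ (onesPos n w).length := by
  simp [onesPos_eq]

theorem onesPos_getElem_of_lt {i : ℕ} (hi : i < n) :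
    (onesPos n w)[i]'(by have := n_le_length_onesPos n w; omega) = i + 1 := by
  simp only [onesPos_eq]
  rw [getElem_append_left (by simpa using hi), getElem_range'_1, Nat.add_comm]

variable (n w) in
theorem length_zerosPos_add_length_onesPos :
    (zerosPos n w).length + (onesPos n w).length = 2 * n + 1 := by
  rw [zerosPos, onesPos, Nat.add_comm, ← length_eq_length_filter_add, length_map, length_range]

variable (n w) in
theorem length_zerosPos_pos : 0 < (zerosPos n w).length := by
  simp [zerosPos_eq]

variable (n w) in
theorem zerosPos_getElem_length_sub_one :
    (zerosPos n w)[(zerosPos n w).length - 1]'(by simp [zerosPos_eq]) = 2 * n + 1 := by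
  simp [zerosPos_eq]

theorem encodeSIP_zerosPos_getElem {i : ℕ} (hX : i < (zerosPos n w).length)
    (hY : i < (onesPos n w).length) : encodeSIP n w (zerosPos n w)[i] = (onesPos n w)[i] := by
  rw [encodeSIP, sigmaList, idxOf_append_of_mem (getElem_mem _),
    zerosPos_sortedLT.nodup.idxOf_getElem,
    getD_append_reverse_sub_of_lt _ _ _ (length_zerosPos_add_length_onesPos n w) hY]

theorem encodeSIP_zerosPos_getElem_of_le {i : ℕ} (hX : i < (zerosPos n w).length)
    (hY : (onesPos n w).length ≤ i) :
    encodeSIP n w (zerosPos n w)[i] = (zerosPos n w)[2 * n - i]'(by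
      have := length_zerosPos_add_length_onesPos n w; omega) := by
  have hlen := length_zerosPos_add_length_onesPos n w
  rw [encodeSIP, sigmaList, idxOf_append_of_mem (getElem_mem _),
    zerosPos_sortedLT.nodup.idxOf_getElem,
    getD_append_reverse_sub_of_le _ _ _ hlen hY (by omega)]

theorem encodeSIP_onesPos_getElem {k : ℕ} (hY : k < (onesPos n w).length)
    (hX : (zerosPos n w).length ≤ k) :
    encodeSIP n w (onesPos n w)[k] = (onesPos n w)[2 * n - k]'(by
      have := length_zerosPos_add_length_onesPos n w; omega) := by
  have hlen := length_zerosPos_add_length_onesPos n w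
  rw [encodeSIP, sigmaList, idxOf_append_reverse_getElem onesPos_sortedLT.nodup hY
      (notMem_zerosPos_of_mem_onesPos (getElem_mem hY)),
    show 2 * n - ((zerosPos n w).length + ((onesPos n w).length - 1 - k)) = 2 * n - (2 * n - k)
      by omega,
    getD_append_reverse_sub_of_lt _ _ _ hlen (by omega)]

theorem encodeSIP_two_mul_add_one :
    encodeSIP n w (2 * n + 1) =
      if (zerosPos n w).length ≤ n then (zerosPos n w).length else 2 * n + 1 := by
  have hlen := length_zerosPos_add_length_onesPos n w
  have hYn := n_le_length_onesPos n w
  have hX := length_zerosPos_pos n w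
  conv_lhs => rw [← zerosPos_getElem_length_sub_one n w]
  split_ifs with h
  · rw [encodeSIP_zerosPos_getElem _ (by omega), onesPos_getElem_of_lt (by omega)]
    omega
  · rw [encodeSIP_zerosPos_getElem_of_le _ (by omega)]
    simp only [show 2 * n - ((zerosPos n w).length - 1) = (zerosPos n w).length - 1 by omega]
    exact zerosPos_getElem_length_sub_one n w

theorem encodeSIP_lt_encodeSIP_two_mul_add_one {p : ℕ} (hp : p ∈ zerosPos n w)
    (hpn : p ≤ 2 * n) : encodeSIP n w p < encodeSIP n w (2 * n + 1) := by
  have hlen := length_zerosPos_add_length_onesPos n w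
  have hYn := n_le_length_onesPos n w
  have hX := length_zerosPos_pos n w
  obtain ⟨m, hm, rfl⟩ := getElem_of_mem hp
  have hms : m < (zerosPos n w).length - 1 :=
    (zerosPos_sortedLT.getElem_lt_getElem_iff (hi := hm) (hj := Nat.sub_lt hX one_pos)).mp
      (by rw [zerosPos_getElem_length_sub_one n w]; omega)
  rw [encodeSIP_zerosPos_getElem hm (by omega), onesPos_getElem_of_lt (by omega),
    encodeSIP_two_mul_add_one]
  split_ifs <;> omega

theorem encodeSIP_two_mul_add_one_lt_encodeSIP {p : ℕ} (hp : p ∈ onesPos n w) (hnp : n < p) :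
    encodeSIP n w (2 * n + 1) < encodeSIP n w p := by
  have hlen := length_zerosPos_add_length_onesPos n w
  have hX := length_zerosPos_pos n w
  obtain ⟨k, hk, rfl⟩ := getElem_of_mem hp
  have hnk : n ≤ k := by
    by_contra hkn
    rw [onesPos_getElem_of_lt (by omega)] at hnp
    omega
  have hXn : (zerosPos n w).length ≤ n := by omega
  rw [encodeSIP_two_mul_add_one, if_pos hXn, encodeSIP_onesPos_getElem hk (by omega)]
  calc (zerosPos n w).length
      = (onesPos n w)[(zerosPos n w).length - 1]'(by omega) := by
        rw [onesPos_getElem_of_lt (by omega)]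
        omega
    _ < (onesPos n w)[2 * n - k] := onesPos_sortedLT.getElem_lt_getElem_iff.mpr (by omega)

theorem testBit_eq_decide_encodeSIP_lt {j : ℕ} (hj : j < n) :
    w.testBit j = decide (encodeSIP n w (2 * n - j) < encodeSIP n w (2 * n + 1)) := by
  have hp₁ : n < 2 * n - j := by omega
  have hp₂ : 2 * n - j ≤ 2 * n := by omega
  have hbit : 2 * n - (2 * n - j) = j := by omega
  cases hb : w.testBit j
  case true =>
    have hp := (mem_zerosPos_iff (w := w) hp₁ hp₂).mpr (by rwa [hbit])
    exact (decide_eq_true (encodeSIP_lt_encodeSIP_two_mul_add_one hp hp₂)).symm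
  case false =>
    have hp := (mem_onesPos_iff (w := w) hp₁ hp₂).mpr (by rwa [hbit])
    exact (decide_eq_false (encodeSIP_two_mul_add_one_lt_encodeSIP hp hp₁).asymm).symm

end Encoding

/-- Encoding an n-bit integer w by Encode_W-to-SIP and decoding by Decode_SIP-to-W
returns w; i.e., the encoding map from n-bit integers to self-inverting
permutations of length 2n+1 is injective. -/
theorem stmt_4 (n w₁ w₂ : ℕ) (hw₁ : w₁ < 2 ^ n) (hw₂ : w₂ < 2 ^ n)
    (h : encodeSIP n w₁ = encodeSIP n w₂) : w₁ = w₂ := by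
  refine Nat.eq_of_testBit_eq fun j => ?_
  by_cases hj : j < n
  · rw [testBit_eq_decide_encodeSIP_lt hj, testBit_eq_decide_encodeSIP_lt hj, h]
  · have hpow : 2 ^ n ≤ 2 ^ j := Nat.pow_le_pow_right two_pos (not_lt.mp hj)
    rw [Nat.testBit_lt_two_pow (hw₁.trans_le hpow), Nat.testBit_lt_two_pow (hw₂.trans_le hpow)]
end

section
/- The reducible permutation flow-graph F[π*] on nodes u_0, u_1, ..., u_{n+1}, containing all 'list' edges (u_{i+1}, u_i) for 0 ≤ i ≤ n, has the unique Hamiltonian path (u_{n+1}, u_n, ..., u_1, u_0). -/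
/-!
Every edge `(a, b)` of the flow-graph is either a list edge (`a = b + 1`) or goes to a larger
node (`a < b`). The footer `u_0` has no outgoing edge, so a Hamiltonian path ends there. Read
backwards from `u_0`, once `u_0, …, u_j` are visited the next node `u_a` has `a > j`, so its edge
`(u_a, u_j)` goes to a smaller node and must be the list edge: `a = j + 1`.
-/

namespace List

theorem exists_eq_append_singleton_of_isChain {α : Type*} {R : α → α → Prop} {l : List α} {s : α}
    (hs : ∀ b, ¬ R s b) (hl : IsChain R l) (h : s ∈ l) : ∃ r, l = r ++ [s] := by
  obtain ⟨r, t, rfl⟩ := mem_iff_append.1 h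
  cases t with
  | nil => exact ⟨r, rfl⟩
  | cons b t => exact (hs b (isChain_append_cons_cons.1 hl).2.1).elim

theorem eq_range'_of_isChain_flip {R : ℕ → ℕ → Prop} (hR : ∀ a b, R a b → a = b + 1 ∨ a < b)
    {N : ℕ} : ∀ {j : ℕ} {r : List ℕ}, IsChain (flip R) (j :: r) → r.Nodup →
      (∀ v, v ∈ r ↔ j < v ∧ v ≤ N) → r = range' (j + 1) (N - j)
  | j, [], _, _, hmem => by
    have hN : ¬ j < N := fun h => not_mem_nil ((hmem N).2 ⟨h, le_rfl⟩)
    rw [Nat.sub_eq_zero_of_le (by omega), range'_zero]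
  | j, a :: r, hchain, hnodup, hmem => by
    obtain ⟨hja, hchain⟩ := isChain_cons_cons.1 hchain
    obtain ⟨hja_lt, ha_le⟩ := (hmem a).1 mem_cons_self
    have ha : a = j + 1 := (hR a j hja).resolve_right (by omega)
    subst ha
    obtain ⟨ha_notMem, hnodup⟩ := nodup_cons.1 hnodup
    have hmem' : ∀ v, v ∈ r ↔ j + 1 < v ∧ v ≤ N := fun v => by
      have hv := hmem v
      rw [mem_cons] at hv
      constructor
      · intro h
        have hne : v ≠ j + 1 := by rintro rfl; exact ha_notMem h
        have := hv.1 (Or.inr h)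
        omega
      · intro h
        exact (hv.2 ⟨by omega, h.2⟩).resolve_left (by omega)
    rw [eq_range'_of_isChain_flip hR hchain hnodup hmem', ← range'_succ,
      show N - (j + 1) + 1 = N - j by omega]

end List

open List in
/-- The reducible permutation flow-graph F[π*] on nodes u_0,...,u_{n+1}, with list
edges (u_{i+1},u_i) and, for each body node u_i (1 ≤ i ≤ n), a max-didomination
edge (u_i, u_m) with i < m ≤ n+1, has the unique Hamiltonian path
(u_{n+1}, u_n, ..., u_1, u_0). -/
theorem stmt_9 (n : ℕ) (d : ℕ → ℕ)
    (hd : ∀ i, 1 ≤ i → i ≤ n → i < d i ∧ d i ≤ n + 1) :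
    let E : ℕ → ℕ → Prop := fun a b =>
      (a ≤ n + 1 ∧ a = b + 1) ∨ (1 ≤ a ∧ a ≤ n ∧ b = d a)
    let hp : List ℕ := (List.range (n + 2)).reverse
    (hp.Nodup ∧ (∀ v, v ∈ hp ↔ v ≤ n + 1) ∧ hp.Chain' E) ∧
    ∀ l : List ℕ, l.Nodup → (∀ v, v ∈ l ↔ v ≤ n + 1) → l.Chain' E → l = hp := by
  intro E hp
  have hE : ∀ a b, E a b → a = b + 1 ∨ a < b := by
    rintro a b (⟨-, rfl⟩ | ⟨h1, hn, rfl⟩)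
    · exact Or.inl rfl
    · exact Or.inr (hd a h1 hn).1
  have hsink : ∀ b, ¬ E 0 b := by rintro b (⟨-, h⟩ | ⟨h, -⟩) <;> omega
  have hp_chain : IsChain E hp := by
    rw [isChain_reverse, isChain_range_succ]
    exact fun m hm => Or.inl ⟨by omega, rfl⟩
  refine ⟨⟨nodup_reverse.2 nodup_range,
    fun v => by simp only [hp, mem_reverse, mem_range]; omega, hp_chain⟩, ?_⟩
  intro l hnodup hmem hchain
  obtain ⟨r, rfl⟩ := exists_eq_append_singleton_of_isChain hsink hchain ((hmem 0).2 (by omega))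
  obtain ⟨h0, hr⟩ := nodup_cons.1 (nodup_append_comm.1 hnodup : (0 :: r).Nodup)
  have hrev : IsChain (flip E) (0 :: r.reverse) := by
    simpa only [reverse_append, reverse_singleton, singleton_append] using
      isChain_reverse (R := flip E) |>.2 hchain
  have hmem_rev : ∀ v, v ∈ r.reverse ↔ 0 < v ∧ v ≤ n + 1 := fun v => by
    have hv := hmem v
    rw [mem_append, mem_singleton] at hv
    rw [mem_reverse]
    constructor
    · intro h
      have : v ≠ 0 := by rintro rfl; exact h0 h
      exact ⟨by omega, hv.1 (Or.inl h)⟩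
    · exact fun h => (hv.2 h.2).resolve_right (by omega)
  have hr_eq := eq_range'_of_isChain_flip hE hrev (nodup_reverse.2 hr) hmem_rev
  calc r ++ [0] = (0 :: r.reverse).reverse := by simp
    _ = hp := by rw [hr_eq, Nat.sub_zero, ← range'_succ, ← range_eq_range']
end

section
/- In a permutation π of {1,...,n}, for every element i with i ≠ max position value appearing before it, define p(i) as the rightmost element to the left of i in π that is greater than i (with sentinel n+1 prepended). Then p(i) equals the maximum-labeled element that directly dominates i. -/
/-!
Let `v` be the nearest element to the left of `i` that exceeds `i`. Nothing between `v` and `i`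
exceeds `i`, so `v` dominates `i` directly; and a dominator `k > v` of `i` lies to the left of `v`,
hence dominates `v`, so it does not dominate `i` directly. Thus `v` is the largest direct
dominator of `i`. Conversely, any element dominating `i` guarantees that a nearest one exists, and
the largest direct dominator is unique, so it must be that nearest one.
-/

namespace List

variable {α : Type*} [LinearOrder α] (L : List α)

def Dominates (a b : α) : Prop :=
  b < a ∧ L.idxOf a < L.idxOf b

def DirectlyDominates (a b : α) : Prop :=
  L.Dominates a b ∧ ¬ ∃ k ∈ L, L.Dominates a k ∧ L.Dominates k b

def IsNearestDominator (v i : α) : Prop :=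
  L.Dominates v i ∧ ∀ k ∈ L, L.Dominates k i → L.idxOf k ≤ L.idxOf v

variable {L}

theorem IsNearestDominator.directlyDominates {v i : α} (h : L.IsNearestDominator v i) :
    L.DirectlyDominates v i := by
  refine ⟨h.1, ?_⟩
  rintro ⟨k, hk, ⟨-, hvk⟩, hki⟩
  exact absurd (h.2 k hk hki) (not_le.2 hvk)

theorem IsNearestDominator.le_of_directlyDominates {v i k : α} (h : L.IsNearestDominator v i)
    (hv : v ∈ L) (hk : k ∈ L) (hki : L.DirectlyDominates k i) : k ≤ v := by
  by_contra! hvk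
  have hidx_ne : L.idxOf k ≠ L.idxOf v := fun heq => hvk.ne' ((idxOf_inj hk).1 heq)
  have hkv : L.Dominates k v := ⟨hvk, (h.2 k hk hki.1).lt_of_ne hidx_ne⟩
  exact hki.2 ⟨v, hv, hkv, h.1⟩

theorem exists_isNearestDominator {v i : α} (hv : v ∈ L) (hvi : L.Dominates v i) :
    ∃ w ∈ L, L.IsNearestDominator w i := by
  classical
  obtain ⟨w, hw, hmax⟩ := Finset.exists_max_image (L.toFinset.filter (L.Dominates · i)) L.idxOf
    ⟨v, Finset.mem_filter.2 ⟨mem_toFinset.2 hv, hvi⟩⟩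
  rw [Finset.mem_filter, mem_toFinset] at hw
  exact ⟨w, hw.1, hw.2, fun k hk hki =>
    hmax k (Finset.mem_filter.2 ⟨mem_toFinset.2 hk, hki⟩)⟩

theorem isNearestDominator_iff_isGreatest_directlyDominates {v i : α} (hv : v ∈ L) :
    L.IsNearestDominator v i ↔
      L.DirectlyDominates v i ∧ ∀ k ∈ L, L.DirectlyDominates k i → k ≤ v :=
  ⟨fun h => ⟨h.directlyDominates, fun _ hk => h.le_of_directlyDominates hv hk⟩, by
    rintro ⟨hvi, hgreatest⟩
    obtain ⟨w, hw, hwi⟩ := exists_isNearestDominator hv hvi.1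
    have hwv : w = v :=
      (hgreatest w hw hwi.directlyDominates).antisymm (hwi.le_of_directlyDominates hw hv hvi)
    exact hwv ▸ hwi⟩

theorem exists_getD_nearest_greater_iff_isNearestDominator (hL : L.Nodup) (d : α) {v i : α}
    (hv : v ∈ L) :
    (∃ jv, jv < L.idxOf i ∧ L.getD jv d = v ∧ i < v ∧
        ∀ j, jv < j → j < L.idxOf i → ¬ i < L.getD j d) ↔ L.IsNearestDominator v i := by
  have hlen {j : ℕ} (hj : j < L.idxOf i) : j < L.length := hj.trans_le (idxOf_le_length)
  constructor
  · rintro ⟨jv, hjv, hjv_v, hiv, hnearest⟩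
    have hjv_len := hlen hjv
    rw [getD_eq_getElem _ _ hjv_len] at hjv_v
    subst hjv_v
    have hidx : L.idxOf L[jv] = jv := hL.idxOf_getElem _ _
    refine ⟨⟨hiv, hidx.symm ▸ hjv⟩, fun k hk hki => ?_⟩
    by_contra! hjk
    rw [hidx] at hjk
    have hk_idx := idxOf_lt_length_iff.2 hk
    exact hnearest _ hjk hki.2 (by rw [getD_eq_getElem _ _ hk_idx, getElem_idxOf]; exact hki.1)
  · intro h
    have hv_idx := idxOf_lt_length_iff.2 hv
    refine ⟨L.idxOf v, h.1.2, by rw [getD_eq_getElem _ _ hv_idx, getElem_idxOf], h.1.1,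
      fun j hvj hji hij => ?_⟩
    have hj := hlen hji
    rw [getD_eq_getElem _ _ hj] at hij
    have hki : L.Dominates L[j] i := ⟨hij, by rwa [hL.idxOf_getElem]⟩
    exact absurd (h.2 _ (getElem_mem _) hki) (by rw [hL.idxOf_getElem]; exact not_le.2 hvj)

end List

/-- In a permutation (listed as l, a rearrangement of 1,...,n, with sentinel n+1
prepended to form L), for every element i, the value v at the rightmost position
to the left of i that is greater than i equals the maximum-labeled element that
directly dominates i. -/
theorem stmt_10 (n : ℕ) (l : List ℕ) (hl : l.Perm ((List.range n).map (· + 1))) :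
    let L : List ℕ := (n + 1) :: l
    let dom : ℕ → ℕ → Prop := fun a b => b < a ∧ L.idxOf a < L.idxOf b
    let didom : ℕ → ℕ → Prop := fun a b => dom a b ∧ ¬ ∃ k ∈ L, dom a k ∧ dom k b
    ∀ i ∈ l, ∀ v ∈ L,
      ((∃ jv, jv < L.idxOf i ∧ L.getD jv 0 = v ∧ i < v ∧
          ∀ j, jv < j → j < L.idxOf i → ¬ i < L.getD j 0) ↔
        (didom v i ∧ ∀ k ∈ L, didom k i → k ≤ v)) := by
  intro L dom didom i _ v hv
  have hL : L.Nodup := List.nodup_cons.2 ⟨fun h => by simpa using hl.mem_iff.1 h,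
    hl.nodup_iff.2 (List.nodup_range.map (add_left_injective 1))⟩
  exact (L.exists_getD_nearest_greater_iff_isNearestDominator hL 0 hv).trans
    (List.isNearestDominator_iff_isGreatest_directlyDominates hv)
end

section
/- The graph F[π*] is a reducible flow-graph: every strongly connected subgraph of F[π*] with more than one vertex has at most one entry point; equivalently, every back edge (u_i, u_m) with m > i w.r.t. the list order creates a cycle with a unique entry. -/
/-!
Every list edge `u_{i+1} → u_i` descends by exactly one and every forward edge ascends, so a path
from `s = u_{n+1}` to a vertex below `m = max S` must visit `m` itself. Hence the only possible
entry of any vertex set `S` is its maximum, which is the reducibility of `F[π*]`.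
-/

namespace List

/-- Discrete intermediate value theorem. -/
theorem IsChain.mem_of_le_head_of_getLast_le {R : ℕ → ℕ → Prop}
    (hR : ∀ a b, R a b → a ≤ b + 1) {m : ℕ} :
    ∀ {p : List ℕ}, p.IsChain R → ∀ {a b : ℕ}, p.head? = some a → p.getLast? = some b →
      m ≤ a → b ≤ m → m ∈ p
  | [], _, _, _, hhead, _, _, _ => by simp at hhead
  | [x], _, _, _, hhead, hlast, hma, hbm => by
    simp only [head?_cons, getLast?_singleton, Option.some.injEq] at hhead hlast
    subst hhead hlast
    simp [le_antisymm hbm hma]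
  | x :: y :: l, hchain, _, _, hhead, hlast, hma, hbm => by
    simp only [head?_cons, Option.some.injEq] at hhead
    subst hhead
    rcases hma.eq_or_lt with rfl | hlt
    · exact mem_cons_self
    obtain ⟨hxy, htail⟩ := isChain_cons_cons.mp hchain
    have hmy : m ≤ y := by have := hR _ _ hxy; omega
    rw [getLast?_cons_cons] at hlast
    exact mem_cons_of_mem _ (htail.mem_of_le_head_of_getLast_le hR rfl hlast hmy hbm)

end List

namespace Finset

theorem eq_max'_of_isChain_of_mem_eq {R : ℕ → ℕ → Prop} (hR : ∀ a b, R a b → a ≤ b + 1)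
    {S : Finset ℕ} (hS : S.Nonempty) {p : List ℕ} (hchain : p.IsChain R) {s x : ℕ}
    (hhead : p.head? = some s) (hlast : p.getLast? = some x) (hs : S.max' hS ≤ s) (hx : x ∈ S)
    (honly : ∀ y ∈ p, y ∈ S → y = x) : x = S.max' hS :=
  (honly _ (hchain.mem_of_le_head_of_getLast_le hR hhead hlast hs (S.le_max' x hx))
    (S.max'_mem hS)).symm

end Finset

/-- F[π*] is reducible: every strongly connected subgraph (on a vertex set S with
at least two vertices) has at most one entry, where an entry of S is a node x ∈ S
admitting a path from the initial node s = u_{n+1} whose only vertex in S is x. -/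
theorem stmt_19 (n : ℕ) (d : ℕ → ℕ)
    (hd : ∀ i, 1 ≤ i → i ≤ n → i < d i ∧ d i ≤ n + 1) :
    let E : ℕ → ℕ → Prop := fun a b =>
      (a ≤ n + 1 ∧ a = b + 1) ∨ (1 ≤ a ∧ a ≤ n ∧ b = d a)
    ∀ S : Finset ℕ, (∀ x ∈ S, x ≤ n + 1) → 2 ≤ S.card →
      (∀ x ∈ S, ∀ y ∈ S,
        Relation.ReflTransGen (fun a b => a ∈ S ∧ b ∈ S ∧ E a b) x y) →
      ∀ x₁ ∈ S, ∀ x₂ ∈ S,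
        (∃ p : List ℕ, p.Chain' E ∧ p.head? = some (n + 1) ∧
          p.getLast? = some x₁ ∧ ∀ y ∈ p, y ∈ S → y = x₁) →
        (∃ p : List ℕ, p.Chain' E ∧ p.head? = some (n + 1) ∧
          p.getLast? = some x₂ ∧ ∀ y ∈ p, y ∈ S → y = x₂) →
        x₁ = x₂ := by
  intro E S hS _ _ x₁ hx₁ x₂ hx₂ ⟨p₁, hc₁, hh₁, hl₁, ho₁⟩ ⟨p₂, hc₂, hh₂, hl₂, ho₂⟩
  have hE : ∀ a b, E a b → a ≤ b + 1 := by
    rintro a b (⟨_, rfl⟩ | ⟨ha₁, han, rfl⟩)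
    · exact le_rfl
    · exact ((hd a ha₁ han).1).le.trans (Nat.le_succ _)
  have hne : S.Nonempty := ⟨x₁, hx₁⟩
  have hmax : S.max' hne ≤ n + 1 := hS _ (S.max'_mem hne)
  rw [S.eq_max'_of_isChain_of_mem_eq hE hne hc₁ hh₁ hl₁ hmax hx₁ ho₁,
    S.eq_max'_of_isChain_of_mem_eq hE hne hc₂ hh₂ hl₂ hmax hx₂ ho₂]
end
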